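/- Let k be a field and let m > k > 2 and n > l > 2 be integers. Let a_m, b_n, b_2 ≥ 0 and a_k, b_l ∈ {0, 1}, and let p be the weakly decreasing sequence consisting of a_m parts equal to m, then a_k parts equal to k, then one part equal to 1, and q the weakly decreasing sequence consisting of b_n parts equal to n, then b_l parts equal to l, then b_2 parts equal to 2. Assume |ℓ(p) − ℓ(q)| ≤ 1 and that at least one of a_m ≥ 2, b_n ≥ 2, b_2 ≥ 2 holds. Then the triple (X, Y, M_{p,q}) is decomposable. -/
import Mathlib

open Polynomial

/-- `J K a` is the `K[T]`-module `K[T]/(T^a)` (with `T` the polynomial variable `X`). -/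
abbrev J (K : Type*) [Field K] (a : ℕ) : Type _ :=
  Polynomial K ⧸ Ideal.span {(X : Polynomial K) ^ a}

/-- Multiplication by `T^e` as a `K[T]`-linear map `J_a → J_b`; it is well defined
when `b ≤ e + a`, and we set it to `0` otherwise. -/
noncomputable def mulTpow (K : Type*) [Field K] (a b e : ℕ) :
    J K a →ₗ[Polynomial K] J K b :=
  if h : b ≤ e + a then
    Submodule.liftQ (Ideal.span {(X : Polynomial K) ^ a})
      ((Ideal.span {(X : Polynomial K) ^ b}).mkQ ∘ₗ
        ((X : Polynomial K) ^ e • (LinearMap.id : Polynomial K →ₗ[Polynomial K] Polynomial K)))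
      (by
        refine Submodule.span_le.mpr ?_
        intro x hx
        rw [Set.mem_singleton_iff] at hx
        subst hx
        simp only [SetLike.mem_coe, LinearMap.mem_ker, LinearMap.comp_apply,
          LinearMap.smul_apply, LinearMap.id_apply, Submodule.mkQ_apply,
          Submodule.Quotient.mk_eq_zero, smul_eq_mul]
        exact Ideal.mem_span_singleton.mpr (by
          rw [← pow_add]; exact pow_dvd_pow X h))
  else 0

/-- The map `M_{p,q}`: its component from the `i`-th summand `J_{p i}` to the `j`-th
summand `J_{q j}` is multiplication by `T^{q j - 2}` if `p i ≥ 2` and by `T^{q j - 1}`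
if `p i = 1`, whenever `i - j ∈ {ℓ(p) - ℓ(q) - 1, ℓ(p) - ℓ(q)}`, and `0` otherwise. -/
noncomputable def Mpq (K : Type*) [Field K] (lp lq : ℕ) (p : Fin lp → ℕ) (q : Fin lq → ℕ) :
    ((i : Fin lp) → J K (p i)) →ₗ[Polynomial K] ((j : Fin lq) → J K (q j)) :=
  LinearMap.pi fun j =>
    ∑ i : Fin lp,
      (if ((i : ℤ) - (j : ℤ) = (lp : ℤ) - (lq : ℤ) - 1 ∨
            (i : ℤ) - (j : ℤ) = (lp : ℤ) - (lq : ℤ))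
        then mulTpow K (p i) (q j) (if 2 ≤ p i then q j - 2 else q j - 1)
        else 0) ∘ₗ LinearMap.proj i

/-- A triple `(M, N, C)` is decomposable if it admits an idempotent endomorphism pair
`(F, G)` other than `(0, 0)` and `(id, id)`. -/
def TripleDecomposable {K : Type*} [Field K] {M N : Type*}
    [AddCommGroup M] [Module (Polynomial K) M]
    [AddCommGroup N] [Module (Polynomial K) N] (C : M →ₗ[Polynomial K] N) : Prop :=
  ∃ (F : M →ₗ[Polynomial K] M) (G : N →ₗ[Polynomial K] N),
    G ∘ₗ C = C ∘ₗ F ∧ F ∘ₗ F = F ∧ G ∘ₗ G = G ∧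
    ¬(F = 0 ∧ G = 0) ∧ ¬(F = LinearMap.id ∧ G = LinearMap.id)

section Helpers

lemma J_nontrivial (K : Type*) [Field K] (a : ℕ) (ha : 0 < a) : Nontrivial (J K a) := by
  refine ⟨Submodule.Quotient.mk 1, 0, fun h => ?_⟩
  rw [Submodule.Quotient.mk_eq_zero, Ideal.mem_span_singleton] at h
  have hX : (X : Polynomial K) ∣ 1 := dvd_trans (dvd_pow_self X (by omega)) h
  rw [Polynomial.X_dvd_iff] at hX
  simp at hX

lemma mulTpow_comp (K : Type*) [Field K] (a b c e1 e2 : ℕ)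
    (h1 : b ≤ e1 + a) (h2 : c ≤ e2 + b) :
    mulTpow K b c e2 ∘ₗ mulTpow K a b e1 = mulTpow K a c (e1 + e2) := by
  have h3 : c ≤ e1 + e2 + a := by omega
  rw [mulTpow, mulTpow, mulTpow, dif_pos h1, dif_pos h2, dif_pos h3]
  refine Submodule.linearMap_qext _ ?_
  refine LinearMap.ext fun f => ?_
  simp only [LinearMap.comp_apply, Submodule.mkQ_apply, Submodule.liftQ_apply,
    LinearMap.smul_apply, LinearMap.id_apply, smul_eq_mul]
  congr 1
  ring

end Helpers

section Abstract

variable {K : Type*} [Field K] {lp lq : ℕ}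
  {M : Fin lp → Type*} {N : Fin lq → Type*}
  [∀ i, AddCommGroup (M i)] [∀ i, Module (Polynomial K) (M i)]
  [∀ j, AddCommGroup (N j)] [∀ j, Module (Polynomial K) (N j)]
  (C : ((i : Fin lp) → M i) →ₗ[Polynomial K] ((j : Fin lq) → N j))

lemma split_lemma (c c' : Fin lp) (hcc : c' ≠ c) (r0 r1 : Fin lq) (hrr : r1 ≠ r0)
    (φ : M c' →ₗ[Polynomial K] M c) (ι : N r0 →ₗ[Polynomial K] N r1)
    (hM : Nontrivial (M c')) (hN : Nontrivial (N r0))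
    (H1 : ∀ j : Fin lq, j ≠ r0 → j ≠ r1 → ∀ x : M c, C (Pi.single c x) j = 0)
    (H2 : ∀ i : Fin lp, i ≠ c → i ≠ c' → ∀ x : M i, C (Pi.single i x) r0 = 0)
    (H3 : ∀ x : M c', C (Pi.single c (φ x)) r0 = C (Pi.single c' x) r0)
    (H4 : ∀ x : M c, ι (C (Pi.single c x) r0) = C (Pi.single c x) r1)
    (H5 : ∀ x : M c', ι (C (Pi.single c' x) r0) = C (Pi.single c (φ x)) r1) :
    TripleDecomposable C := by
  classical
  set F : ((i : Fin lp) → M i) →ₗ[Polynomial K] ((i : Fin lp) → M i) :=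
    (LinearMap.single (Polynomial K) M c) ∘ₗ
      (LinearMap.proj c + φ ∘ₗ LinearMap.proj c') with hF
  set G : ((j : Fin lq) → N j) →ₗ[Polynomial K] ((j : Fin lq) → N j) :=
    (LinearMap.single (Polynomial K) N r0) ∘ₗ LinearMap.proj r0
      + (LinearMap.single (Polynomial K) N r1) ∘ₗ (ι ∘ₗ LinearMap.proj r0) with hG
  have hFapp : ∀ x, F x = Pi.single c (x c + φ (x c')) := by
    intro x
    simp [hF, LinearMap.comp_apply, LinearMap.add_apply, LinearMap.proj_apply,
      LinearMap.coe_single]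
  have hGapp : ∀ y, G y = Pi.single r0 (y r0) + Pi.single r1 (ι (y r0)) := by
    intro y
    simp [hG, LinearMap.comp_apply, LinearMap.add_apply, LinearMap.proj_apply,
      LinearMap.coe_single]
  refine ⟨F, G, ?_, ?_, ?_, ?_, ?_⟩
  · -- G ∘ C = C ∘ F
    refine LinearMap.pi_ext' fun i => LinearMap.ext fun x => ?_
    simp only [LinearMap.comp_apply, LinearMap.coe_single]
    rw [hFapp, hGapp]
    funext j
    rcases eq_or_ne i c with rfl | hic
    · rw [Pi.single_eq_same, Pi.single_eq_of_ne hcc, map_zero, add_zero]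
      rcases eq_or_ne j r0 with rfl | hjr0
      · rw [Pi.add_apply, Pi.single_eq_same, Pi.single_eq_of_ne (Ne.symm hrr), add_zero]
      · rcases eq_or_ne j r1 with rfl | hjr1
        · rw [Pi.add_apply, Pi.single_eq_same, Pi.single_eq_of_ne hrr, zero_add]
          exact H4 x
        · rw [Pi.add_apply, Pi.single_eq_of_ne hjr0, Pi.single_eq_of_ne hjr1, add_zero]
          exact (H1 j hjr0 hjr1 x).symm
    · rcases eq_or_ne i c' with rfl | hic'
      · rw [Pi.single_eq_of_ne (Ne.symm hic), Pi.single_eq_same, zero_add]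
        rcases eq_or_ne j r0 with rfl | hjr0
        · rw [Pi.add_apply, Pi.single_eq_same, Pi.single_eq_of_ne (Ne.symm hrr), add_zero]
          exact (H3 x).symm
        · rcases eq_or_ne j r1 with rfl | hjr1
          · rw [Pi.add_apply, Pi.single_eq_same, Pi.single_eq_of_ne hrr, zero_add]
            exact H5 x
          · rw [Pi.add_apply, Pi.single_eq_of_ne hjr0, Pi.single_eq_of_ne hjr1, add_zero]
            exact (H1 j hjr0 hjr1 (φ x)).symm
      · have h2 := H2 i hic hic' x
        simp [h2, Pi.single_eq_of_ne (Ne.symm hic), Pi.single_eq_of_ne (Ne.symm hic')]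
  · -- F ∘ F = F
    refine LinearMap.ext fun x => ?_
    simp only [LinearMap.comp_apply]
    rw [hFapp x, hFapp]
    rw [Pi.single_eq_same, Pi.single_eq_of_ne hcc, map_zero, add_zero]
  · -- G ∘ G = G
    refine LinearMap.ext fun y => ?_
    simp only [LinearMap.comp_apply]
    rw [hGapp y, hGapp]
    simp [Pi.single_eq_same, Pi.single_eq_of_ne (Ne.symm hrr)]
  · rintro ⟨-, hG0⟩
    obtain ⟨w, hw⟩ := exists_ne (0 : N r0)
    have h1 : G (Pi.single r0 w) r0 = 0 := by rw [hG0]; simp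
    rw [hGapp] at h1
    simp only [Pi.add_apply, Pi.single_eq_same, Pi.single_eq_of_ne (Ne.symm hrr),
      add_zero] at h1
    exact hw h1
  · rintro ⟨hFid, -⟩
    obtain ⟨v, hv⟩ := exists_ne (0 : M c')
    have h1 : F (Pi.single c' v) c' = Pi.single c' v c' := by rw [hFid]; simp
    rw [hFapp, Pi.single_eq_of_ne hcc, Pi.single_eq_same] at h1
    exact hv h1.symm

lemma zeroRow_lemma (r0 : Fin lq) (i0 : Fin lp)
    (hM : Nontrivial (M i0)) (hN : Nontrivial (N r0))
    (H : ∀ x, C x r0 = 0) : TripleDecomposable C := by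
  classical
  set G : ((j : Fin lq) → N j) →ₗ[Polynomial K] ((j : Fin lq) → N j) :=
    LinearMap.id - (LinearMap.single (Polynomial K) N r0) ∘ₗ LinearMap.proj r0 with hG
  have hGapp : ∀ y, G y = y - Pi.single r0 (y r0) := by
    intro y
    simp [hG, LinearMap.sub_apply, LinearMap.comp_apply, LinearMap.proj_apply,
      LinearMap.coe_single]
  refine ⟨LinearMap.id, G, ?_, ?_, ?_, ?_, ?_⟩
  · refine LinearMap.ext fun x => ?_
    simp only [LinearMap.comp_apply, LinearMap.id_apply]
    rw [hGapp, H x]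
    simp
  · rfl
  · refine LinearMap.ext fun y => ?_
    simp only [LinearMap.comp_apply]
    rw [hGapp y, hGapp]
    simp [Pi.single_eq_same]
  · rintro ⟨hF0, -⟩
    obtain ⟨v, hv⟩ := exists_ne (0 : M i0)
    have h1 : (Pi.single i0 v : (i : Fin lp) → M i) i0 = 0 := by
      have := congrFun (congrArg DFunLike.coe hF0) (Pi.single i0 v)
      simp only [LinearMap.id_apply, LinearMap.zero_apply] at this
      rw [this]; simp
    rw [Pi.single_eq_same] at h1
    exact hv h1
  · rintro ⟨-, hGid⟩
    obtain ⟨w, hw⟩ := exists_ne (0 : N r0)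
    have h1 : G (Pi.single r0 w) r0 = Pi.single r0 w r0 := by rw [hGid]; simp
    rw [hGapp, Pi.sub_apply, Pi.single_eq_same, Pi.single_eq_same, sub_self] at h1
    exact hw h1.symm

end Abstract

section Components

lemma Mpq_apply_single (K : Type*) [Field K] (lp lq : ℕ) (p : Fin lp → ℕ)
    (q : Fin lq → ℕ) (i : Fin lp) (j : Fin lq) (x : J K (p i)) :
    Mpq K lp lq p q (Pi.single i x) j =
      (if ((i : ℤ) - (j : ℤ) = (lp : ℤ) - (lq : ℤ) - 1 ∨
            (i : ℤ) - (j : ℤ) = (lp : ℤ) - (lq : ℤ))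
        then mulTpow K (p i) (q j) (if 2 ≤ p i then q j - 2 else q j - 1)
        else 0) x := by
  classical
  simp only [Mpq, LinearMap.pi_apply, LinearMap.sum_apply, LinearMap.comp_apply,
    LinearMap.proj_apply]
  rw [Finset.sum_eq_single i]
  · rw [Pi.single_eq_same]
  · intro b _ hb
    rw [Pi.single_eq_of_ne hb, map_zero]
  · intro h
    exact absurd (Finset.mem_univ i) h

lemma Mpq_row_zero (K : Type*) [Field K] {lp lq : ℕ} (p : Fin lp → ℕ) (q : Fin lq → ℕ)
    (j : Fin lq)
    (hj : ∀ i : Fin lp, ¬((i : ℤ) - (j : ℤ) = (lp : ℤ) - (lq : ℤ) - 1 ∨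
      (i : ℤ) - (j : ℤ) = (lp : ℤ) - (lq : ℤ))) (x : (i : Fin lp) → J K (p i)) :
    Mpq K lp lq p q x j = 0 := by
  have hx : ∑ i, Pi.single i (x i) = x := Finset.univ_sum_single x
  rw [← hx, map_sum, Finset.sum_apply]
  refine Finset.sum_eq_zero fun i _ => ?_
  rw [Mpq_apply_single, if_neg (hj i), LinearMap.zero_apply]

end Components

section Instantiations

variable (K : Type*) [Field K] {lp lq : ℕ} (p : Fin lp → ℕ) (q : Fin lq → ℕ)

/-- All three cells `(r0,c)`, `(r0,c')`, `(r1,c)` present. -/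
lemma Mpq_split_all (c c' : Fin lp) (r0 r1 : Fin lq)
    (hcc : c' ≠ c) (hrr : r1 ≠ r0)
    (hpres1 : (c : ℤ) - (r0 : ℤ) = (lp : ℤ) - (lq : ℤ) - 1 ∨
      (c : ℤ) - (r0 : ℤ) = (lp : ℤ) - (lq : ℤ))
    (hpres2 : (c' : ℤ) - (r0 : ℤ) = (lp : ℤ) - (lq : ℤ) - 1 ∨
      (c' : ℤ) - (r0 : ℤ) = (lp : ℤ) - (lq : ℤ))
    (hpres3 : (c : ℤ) - (r1 : ℤ) = (lp : ℤ) - (lq : ℤ) - 1 ∨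
      (c : ℤ) - (r1 : ℤ) = (lp : ℤ) - (lq : ℤ))
    (Hcol : ∀ j : Fin lq, ((c : ℤ) - (j : ℤ) = (lp : ℤ) - (lq : ℤ) - 1 ∨
      (c : ℤ) - (j : ℤ) = (lp : ℤ) - (lq : ℤ)) → j = r0 ∨ j = r1)
    (Hrow : ∀ i : Fin lp, ((i : ℤ) - (r0 : ℤ) = (lp : ℤ) - (lq : ℤ) - 1 ∨
      (i : ℤ) - (r0 : ℤ) = (lp : ℤ) - (lq : ℤ)) → i = c ∨ i = c')
    (h2c : 2 ≤ p c) (h2c' : 2 ≤ p c') (hple : p c ≤ p c')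
    (hq0 : 2 ≤ q r0) (hqle : q r0 ≤ q r1) :
    TripleDecomposable (Mpq K lp lq p q) := by
  refine split_lemma (Mpq K lp lq p q) c c' hcc r0 r1 hrr
    (mulTpow K (p c') (p c) 0)
    (mulTpow K (q r0) (q r1) (q r1 - q r0))
    (J_nontrivial K _ (by omega)) (J_nontrivial K _ (by omega))
    ?_ ?_ ?_ ?_ ?_
  · intro j hj0 hj1 x
    rw [Mpq_apply_single, if_neg, LinearMap.zero_apply]
    intro hcond
    rcases Hcol j hcond with h | h
    · exact hj0 h
    · exact hj1 h
  · intro i hic hic' x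
    rw [Mpq_apply_single, if_neg, LinearMap.zero_apply]
    intro hcond
    rcases Hrow i hcond with h | h
    · exact hic h
    · exact hic' h
  · intro x
    rw [Mpq_apply_single, Mpq_apply_single, if_pos hpres1, if_pos hpres2,
      if_pos h2c, if_pos h2c', ← LinearMap.comp_apply,
      mulTpow_comp K _ _ _ 0 _ (by omega) (by omega), zero_add]
  · intro x
    rw [Mpq_apply_single, Mpq_apply_single, if_pos hpres1, if_pos hpres3,
      if_pos h2c, if_pos h2c, ← LinearMap.comp_apply,
      mulTpow_comp K _ _ _ _ _ (by omega) (by omega)]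
    have he : q r0 - 2 + (q r1 - q r0) = q r1 - 2 := by omega
    rw [he]
  · intro x
    rw [Mpq_apply_single, Mpq_apply_single, if_pos hpres2, if_pos hpres3,
      if_pos h2c', if_pos h2c, ← LinearMap.comp_apply, ← LinearMap.comp_apply,
      mulTpow_comp K _ _ _ _ _ (by omega) (by omega),
      mulTpow_comp K _ _ _ 0 _ (by omega) (by omega), zero_add]
    have he : q r0 - 2 + (q r1 - q r0) = q r1 - 2 := by omega
    rw [he]

/-- Cell `(r1,c)` absent; `ι = 0`. -/
lemma Mpq_split_iota0 (c c' : Fin lp) (r0 r1 : Fin lq)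
    (hcc : c' ≠ c) (hrr : r1 ≠ r0)
    (hpres1 : (c : ℤ) - (r0 : ℤ) = (lp : ℤ) - (lq : ℤ) - 1 ∨
      (c : ℤ) - (r0 : ℤ) = (lp : ℤ) - (lq : ℤ))
    (hpres2 : (c' : ℤ) - (r0 : ℤ) = (lp : ℤ) - (lq : ℤ) - 1 ∨
      (c' : ℤ) - (r0 : ℤ) = (lp : ℤ) - (lq : ℤ))
    (habs3 : ¬((c : ℤ) - (r1 : ℤ) = (lp : ℤ) - (lq : ℤ) - 1 ∨
      (c : ℤ) - (r1 : ℤ) = (lp : ℤ) - (lq : ℤ)))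
    (Hcol : ∀ j : Fin lq, ((c : ℤ) - (j : ℤ) = (lp : ℤ) - (lq : ℤ) - 1 ∨
      (c : ℤ) - (j : ℤ) = (lp : ℤ) - (lq : ℤ)) → j = r0 ∨ j = r1)
    (Hrow : ∀ i : Fin lp, ((i : ℤ) - (r0 : ℤ) = (lp : ℤ) - (lq : ℤ) - 1 ∨
      (i : ℤ) - (r0 : ℤ) = (lp : ℤ) - (lq : ℤ)) → i = c ∨ i = c')
    (h2c : 2 ≤ p c) (h2c' : 2 ≤ p c') (hple : p c ≤ p c')
    (hq0 : 2 ≤ q r0) :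
    TripleDecomposable (Mpq K lp lq p q) := by
  refine split_lemma (Mpq K lp lq p q) c c' hcc r0 r1 hrr
    (mulTpow K (p c') (p c) 0) 0
    (J_nontrivial K _ (by omega)) (J_nontrivial K _ (by omega))
    ?_ ?_ ?_ ?_ ?_
  · intro j hj0 hj1 x
    rw [Mpq_apply_single, if_neg, LinearMap.zero_apply]
    intro hcond
    rcases Hcol j hcond with h | h
    · exact hj0 h
    · exact hj1 h
  · intro i hic hic' x
    rw [Mpq_apply_single, if_neg, LinearMap.zero_apply]
    intro hcond
    rcases Hrow i hcond with h | h
    · exact hic h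
    · exact hic' h
  · intro x
    rw [Mpq_apply_single, Mpq_apply_single, if_pos hpres1, if_pos hpres2,
      if_pos h2c, if_pos h2c', ← LinearMap.comp_apply,
      mulTpow_comp K _ _ _ 0 _ (by omega) (by omega), zero_add]
  · intro x
    rw [Mpq_apply_single, Mpq_apply_single, if_neg habs3, LinearMap.zero_apply,
      LinearMap.zero_apply]
  · intro x
    rw [Mpq_apply_single, Mpq_apply_single, if_neg habs3, LinearMap.zero_apply,
      LinearMap.zero_apply]

/-- Cell `(r0,c')` absent; `φ = 0`. -/
lemma Mpq_split_phi0 (c c' : Fin lp) (r0 r1 : Fin lq)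
    (hcc : c' ≠ c) (hrr : r1 ≠ r0)
    (hpres1 : (c : ℤ) - (r0 : ℤ) = (lp : ℤ) - (lq : ℤ) - 1 ∨
      (c : ℤ) - (r0 : ℤ) = (lp : ℤ) - (lq : ℤ))
    (habs2 : ¬((c' : ℤ) - (r0 : ℤ) = (lp : ℤ) - (lq : ℤ) - 1 ∨
      (c' : ℤ) - (r0 : ℤ) = (lp : ℤ) - (lq : ℤ)))
    (hpres3 : (c : ℤ) - (r1 : ℤ) = (lp : ℤ) - (lq : ℤ) - 1 ∨
      (c : ℤ) - (r1 : ℤ) = (lp : ℤ) - (lq : ℤ))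
    (Hcol : ∀ j : Fin lq, ((c : ℤ) - (j : ℤ) = (lp : ℤ) - (lq : ℤ) - 1 ∨
      (c : ℤ) - (j : ℤ) = (lp : ℤ) - (lq : ℤ)) → j = r0 ∨ j = r1)
    (Hrow : ∀ i : Fin lp, ((i : ℤ) - (r0 : ℤ) = (lp : ℤ) - (lq : ℤ) - 1 ∨
      (i : ℤ) - (r0 : ℤ) = (lp : ℤ) - (lq : ℤ)) → i = c ∨ i = c')
    (h2c : 2 ≤ p c) (h1c' : 1 ≤ p c')
    (hq0 : 2 ≤ q r0) (hqle : q r0 ≤ q r1) :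
    TripleDecomposable (Mpq K lp lq p q) := by
  refine split_lemma (Mpq K lp lq p q) c c' hcc r0 r1 hrr
    0 (mulTpow K (q r0) (q r1) (q r1 - q r0))
    (J_nontrivial K _ (by omega)) (J_nontrivial K _ (by omega))
    ?_ ?_ ?_ ?_ ?_
  · intro j hj0 hj1 x
    rw [Mpq_apply_single, if_neg, LinearMap.zero_apply]
    intro hcond
    rcases Hcol j hcond with h | h
    · exact hj0 h
    · exact hj1 h
  · intro i hic hic' x
    rw [Mpq_apply_single, if_neg, LinearMap.zero_apply]
    intro hcond
    rcases Hrow i hcond with h | h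
    · exact hic h
    · exact hic' h
  · intro x
    rw [LinearMap.zero_apply, Pi.single_zero, map_zero, Pi.zero_apply,
      Mpq_apply_single, if_neg habs2, LinearMap.zero_apply]
  · intro x
    rw [Mpq_apply_single, Mpq_apply_single, if_pos hpres1, if_pos hpres3,
      if_pos h2c, if_pos h2c, ← LinearMap.comp_apply,
      mulTpow_comp K _ _ _ _ _ (by omega) (by omega)]
    have he : q r0 - 2 + (q r1 - q r0) = q r1 - 2 := by omega
    rw [he]
  · intro x
    rw [Mpq_apply_single, if_neg habs2, LinearMap.zero_apply, map_zero,
      LinearMap.zero_apply, Pi.single_zero, map_zero, Pi.zero_apply]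

end Instantiations

/-- For `p = (m^{a_m}, kk^{a_k}, 1)` and `q = (n^{b_n}, ll^{b_l}, 2^{b_2})` with
`m > kk > 2`, `n > ll > 2`, `a_k, b_l ∈ {0,1}`, if `|ℓ(p) − ℓ(q)| ≤ 1` and one of
`a_m ≥ 2`, `b_n ≥ 2`, `b_2 ≥ 2` holds, then the triple `(X, Y, M_{p,q})` is
decomposable. -/
theorem Mpq_decomposable_of_repeated_part (K : Type*) [Field K]
    (m kk n ll : ℕ) (hmk : kk < m) (hk2 : 2 < kk) (hnl : ll < n) (hl2 : 2 < ll)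
    (am ak bn bl b2 : ℕ) (hak : ak ≤ 1) (hbl : bl ≤ 1)
    (hlen : (am + ak + 1 : ℤ) - (bn + bl + b2 : ℤ) ≤ 1 ∧
      (bn + bl + b2 : ℤ) - (am + ak + 1 : ℤ) ≤ 1)
    (hrep : 2 ≤ am ∨ 2 ≤ bn ∨ 2 ≤ b2) :
    TripleDecomposable
      (Mpq K (am + ak + 1) (bn + bl + b2)
        (fun i => if (i : ℕ) < am then m else if (i : ℕ) < am + ak then kk else 1)
        (fun j => if (j : ℕ) < bn then n else if (j : ℕ) < bn + bl then ll else 2)) := by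
  obtain ⟨hlen1, hlen2⟩ := hlen
  rcases (show (bn + bl + b2) = (am + ak + 1) + 1 ∨ (am + ak + 1) = (bn + bl + b2) ∨
      (am + ak + 1) = (bn + bl + b2) + 1 by omega) with hd | hd | hd
  · -- d = -1 : row 0 of the matrix is zero
    refine zeroRow_lemma _ ⟨0, by omega⟩ ⟨0, by omega⟩
      (J_nontrivial K _ ?_) (J_nontrivial K _ ?_) ?_
    · dsimp only; split_ifs <;> omega
    · dsimp only; split_ifs <;> omega
    · intro x
      refine Mpq_row_zero K _ _ _ ?_ x
      intro i
      rcases i with ⟨iv, hiv⟩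
      simp only [Fin.val_mk]
      omega
  · -- d = 0
    rcases hrep with ham | hbn | hb2
    · -- p 0 = p 1 = m
      refine Mpq_split_all K _ _ ⟨0, by omega⟩ ⟨1, by omega⟩ ⟨1, by omega⟩ ⟨0, by omega⟩
        (by simp only [ne_eq, Fin.mk.injEq]; omega) (by simp only [ne_eq, Fin.mk.injEq]; omega)
        (by simp only [Fin.val_mk]; omega) (by simp only [Fin.val_mk]; omega)
        (by simp only [Fin.val_mk]; omega) ?_ ?_ ?_ ?_ ?_ ?_ ?_
      · intro j hcond
        rcases j with ⟨jv, hjv⟩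
        simp only [Fin.val_mk] at hcond
        simp only [Fin.mk.injEq]
        omega
      · intro i hcond
        rcases i with ⟨iv, hiv⟩
        simp only [Fin.val_mk] at hcond
        simp only [Fin.mk.injEq]
        omega
      · dsimp only; split_ifs <;> omega
      · dsimp only; split_ifs <;> omega
      · dsimp only; split_ifs <;> omega
      · dsimp only; split_ifs <;> omega
      · dsimp only; split_ifs <;> omega
    · -- q 0 = q 1 = n, row 0 has the single column 0
      refine Mpq_split_phi0 K _ _ ⟨0, by omega⟩ ⟨1, by omega⟩ ⟨0, by omega⟩ ⟨1, by omega⟩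
        (by simp only [ne_eq, Fin.mk.injEq]; omega) (by simp only [ne_eq, Fin.mk.injEq]; omega)
        (by simp only [Fin.val_mk]; omega) (by simp only [Fin.val_mk]; omega)
        (by simp only [Fin.val_mk]; omega) ?_ ?_ ?_ ?_ ?_ ?_
      · intro j hcond
        rcases j with ⟨jv, hjv⟩
        simp only [Fin.val_mk] at hcond
        simp only [Fin.mk.injEq]
        omega
      · intro i hcond
        rcases i with ⟨iv, hiv⟩
        simp only [Fin.val_mk] at hcond
        simp only [Fin.mk.injEq]
        omega
      · dsimp only; split_ifs <;> omega
      · dsimp only; split_ifs <;> omega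
      · dsimp only; split_ifs <;> omega
      · dsimp only; split_ifs <;> omega
    · -- q (lq-2) = q (lq-1) = 2
      by_cases hLQ : bn + bl + b2 = 2
      · -- degenerate: lq = 2, bn = bl = 0
        refine Mpq_split_phi0 K _ _ ⟨0, by omega⟩ ⟨1, by omega⟩ ⟨0, by omega⟩ ⟨1, by omega⟩
          (by simp only [ne_eq, Fin.mk.injEq]; omega) (by simp only [ne_eq, Fin.mk.injEq]; omega)
          (by simp only [Fin.val_mk]; omega) (by simp only [Fin.val_mk]; omega)
          (by simp only [Fin.val_mk]; omega) ?_ ?_ ?_ ?_ ?_ ?_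
        · intro j hcond
          rcases j with ⟨jv, hjv⟩
          simp only [Fin.val_mk] at hcond
          simp only [Fin.mk.injEq]
          omega
        · intro i hcond
          rcases i with ⟨iv, hiv⟩
          simp only [Fin.val_mk] at hcond
          simp only [Fin.mk.injEq]
          omega
        · dsimp only; split_ifs <;> omega
        · dsimp only; split_ifs <;> omega
        · dsimp only; split_ifs <;> omega
        · dsimp only; split_ifs <;> omega
      · -- lq ≥ 3
        refine Mpq_split_all K _ _ ⟨bn + bl + b2 - 2, by omega⟩ ⟨bn + bl + b2 - 3, by omega⟩
          ⟨bn + bl + b2 - 2, by omega⟩ ⟨bn + bl + b2 - 1, by omega⟩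
          (by simp only [ne_eq, Fin.mk.injEq]; omega) (by simp only [ne_eq, Fin.mk.injEq]; omega)
          (by simp only [Fin.val_mk]; omega) (by simp only [Fin.val_mk]; omega)
          (by simp only [Fin.val_mk]; omega) ?_ ?_ ?_ ?_ ?_ ?_ ?_
        · intro j hcond
          rcases j with ⟨jv, hjv⟩
          simp only [Fin.val_mk] at hcond
          simp only [Fin.mk.injEq]
          omega
        · intro i hcond
          rcases i with ⟨iv, hiv⟩
          simp only [Fin.val_mk] at hcond
          simp only [Fin.mk.injEq]
          omega
        · dsimp only; split_ifs <;> omega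
        · dsimp only; split_ifs <;> omega
        · dsimp only; split_ifs <;> omega
        · dsimp only; split_ifs <;> omega
        · dsimp only; split_ifs <;> omega
  · -- d = 1
    rcases hrep with ham | hbn | hb2
    · -- p 0 = p 1 = m, column 0 has the single row 0
      refine Mpq_split_iota0 K _ _ ⟨0, by omega⟩ ⟨1, by omega⟩ ⟨0, by omega⟩ ⟨1, by omega⟩
        (by simp only [ne_eq, Fin.mk.injEq]; omega) (by simp only [ne_eq, Fin.mk.injEq]; omega)
        (by simp only [Fin.val_mk]; omega) (by simp only [Fin.val_mk]; omega)
        (by simp only [Fin.val_mk]; omega) ?_ ?_ ?_ ?_ ?_ ?_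
      · intro j hcond
        rcases j with ⟨jv, hjv⟩
        simp only [Fin.val_mk] at hcond
        simp only [Fin.mk.injEq]
        omega
      · intro i hcond
        rcases i with ⟨iv, hiv⟩
        simp only [Fin.val_mk] at hcond
        simp only [Fin.mk.injEq]
        omega
      · dsimp only; split_ifs <;> omega
      · dsimp only; split_ifs <;> omega
      · dsimp only; split_ifs <;> omega
      · dsimp only; split_ifs <;> omega
    · -- q 0 = q 1 = n
      refine Mpq_split_all K _ _ ⟨1, by omega⟩ ⟨0, by omega⟩ ⟨0, by omega⟩ ⟨1, by omega⟩
        (by simp only [ne_eq, Fin.mk.injEq]; omega) (by simp only [ne_eq, Fin.mk.injEq]; omega)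
        (by simp only [Fin.val_mk]; omega) (by simp only [Fin.val_mk]; omega)
        (by simp only [Fin.val_mk]; omega) ?_ ?_ ?_ ?_ ?_ ?_ ?_
      · intro j hcond
        rcases j with ⟨jv, hjv⟩
        simp only [Fin.val_mk] at hcond
        simp only [Fin.mk.injEq]
        omega
      · intro i hcond
        rcases i with ⟨iv, hiv⟩
        simp only [Fin.val_mk] at hcond
        simp only [Fin.mk.injEq]
        omega
      · dsimp only; split_ifs <;> omega
      · dsimp only; split_ifs <;> omega
      · dsimp only; split_ifs <;> omega
      · dsimp only; split_ifs <;> omega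
      · dsimp only; split_ifs <;> omega
    · -- q (lq-2) = q (lq-1) = 2
      refine Mpq_split_all K _ _ ⟨bn + bl + b2 - 1, by omega⟩ ⟨bn + bl + b2 - 2, by omega⟩
        ⟨bn + bl + b2 - 2, by omega⟩ ⟨bn + bl + b2 - 1, by omega⟩
        (by simp only [ne_eq, Fin.mk.injEq]; omega) (by simp only [ne_eq, Fin.mk.injEq]; omega)
        (by simp only [Fin.val_mk]; omega) (by simp only [Fin.val_mk]; omega)
        (by simp only [Fin.val_mk]; omega) ?_ ?_ ?_ ?_ ?_ ?_ ?_
      · intro j hcond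
        rcases j with ⟨jv, hjv⟩
        simp only [Fin.val_mk] at hcond
        simp only [Fin.mk.injEq]
        omega
      · intro i hcond
        rcases i with ⟨iv, hiv⟩
        simp only [Fin.val_mk] at hcond
        simp only [Fin.mk.injEq]
        omega
      · dsimp only; split_ifs <;> omega
      · dsimp only; split_ifs <;> omega
      · dsimp only; split_ifs <;> omega
      · dsimp only; split_ifs <;> omega
      · dsimp only; split_ifs <;> omega
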